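/- Let E ⊆ ℝ^n be a finite set, invariant under the coordinate-permutation action of S_n, and let m ∈ E be a highest point of E. Then the cones C(σ·m), for σ ∈ S_n, cover ℝ^n: for every x ∈ ℝ^n there exists σ ∈ S_n with ⟨σ·m, x⟩ ≥ ⟨N, x⟩ for all N ∈ E. -/

import Mathlib

open scoped BigOperators

/-- `m` is a highest point of `E ⊆ ℝ^(n+1)`: for every `N ∈ E` the difference `m - N`
is a non-negative linear combination of the simple-root vectors `e_i - e_{i+1}`. -/
def IsHighestPoint {n : ℕ} (E : Finset (Fin (n + 1) → ℝ)) (m : Fin (n + 1) → ℝ) : Prop :=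
  ∀ N ∈ E, ∃ c : Fin n → ℝ, (∀ i, 0 ≤ c i) ∧
    m - N = ∑ i, c i • (Pi.single i.castSucc (1 : ℝ) - Pi.single i.succ (1 : ℝ))

/-- The coordinate-permutation action of the symmetric group on `ℝ^(n+1)`. -/
def permVec {n : ℕ} (σ : Equiv.Perm (Fin (n + 1))) (m : Fin (n + 1) → ℝ) :
    Fin (n + 1) → ℝ :=
  fun i => m (σ⁻¹ i)

/-!
Sort the coordinates of `x` decreasingly by a permutation `σ`. Pairing with a decreasing vector
is non-negative on every simple root `e_i - e_{i+1}`, so a highest point `m` pairs with it at least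
as well as any other point of `E`; undoing the permutation on both sides (which preserves `E`)
gives `⟨N, x⟩ ≤ ⟨σ·m, x⟩`.
-/

open Matrix

lemma single_sub_single_dotProduct {ι R : Type*} [Fintype ι] [DecidableEq ι] [Ring R]
    (i j : ι) (y : ι → R) : (Pi.single i 1 - Pi.single j 1) ⬝ᵥ y = y i - y j := by
  simp only [sub_dotProduct, single_dotProduct, one_mul]

lemma IsHighestPoint.dotProduct_le {n : ℕ} {E : Finset (Fin (n + 1) → ℝ)}
    {m N y : Fin (n + 1) → ℝ} (hhigh : IsHighestPoint E m) (hN : N ∈ E) (hy : Antitone y) :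
    N ⬝ᵥ y ≤ m ⬝ᵥ y := by
  obtain ⟨c, hc, hmN⟩ := hhigh N hN
  have hpair : (m - N) ⬝ᵥ y = ∑ i, c i * (y i.castSucc - y i.succ) := by
    simp only [hmN, sum_dotProduct, smul_dotProduct, single_sub_single_dotProduct, smul_eq_mul]
  have hnonneg : 0 ≤ (m - N) ⬝ᵥ y := hpair ▸
    Finset.sum_nonneg fun i _ => mul_nonneg (hc i) (sub_nonneg.2 (hy Fin.castSucc_lt_succ.le))
  rwa [sub_dotProduct, sub_nonneg] at hnonneg

lemma permVec_dotProduct {n : ℕ} (σ : Equiv.Perm (Fin (n + 1))) (v x : Fin (n + 1) → ℝ) :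
    permVec σ v ⬝ᵥ x = v ⬝ᵥ (x ∘ σ) :=
  comp_equiv_symm_dotProduct v x σ

lemma exists_perm_antitone_comp {n : ℕ} {α : Type*} [LinearOrder α] (x : Fin n → α) :
    ∃ σ : Equiv.Perm (Fin n), Antitone (x ∘ σ) :=
  ⟨Tuple.sort (OrderDual.toDual ∘ x), Tuple.monotone_sort (OrderDual.toDual ∘ x)⟩

theorem permuted_highest_weight_cones_cover_general
    {n : ℕ} (E : Finset (Fin (n + 1) → ℝ))
    (hperm : ∀ (σ : Equiv.Perm (Fin (n + 1))), ∀ N ∈ E, permVec σ N ∈ E)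
    (m : Fin (n + 1) → ℝ) (hhigh : IsHighestPoint E m) :
    ∀ x : Fin (n + 1) → ℝ, ∃ σ : Equiv.Perm (Fin (n + 1)),
      ∀ N ∈ E, ∑ i, N i * x i ≤ ∑ i, permVec σ m i * x i := by
  intro x
  obtain ⟨σ, hσ⟩ := exists_perm_antitone_comp x
  refine ⟨σ, fun N hN => ?_⟩
  calc N ⬝ᵥ x = permVec σ⁻¹ N ⬝ᵥ (x ∘ σ) := by
        rw [permVec_dotProduct, Function.comp_assoc, ← Equiv.Perm.coe_mul, mul_inv_cancel,
          Equiv.Perm.coe_one, Function.comp_id]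
    _ ≤ m ⬝ᵥ (x ∘ σ) := hhigh.dotProduct_le (hperm σ⁻¹ N hN) hσ
    _ = permVec σ m ⬝ᵥ x := (permVec_dotProduct σ m x).symm

/-- If `E` is a finite `S_n`-invariant set with highest point `m ∈ E`, then the cones
`C(σ·m)`, for `σ ∈ S_n`, cover `ℝ^n`: every `x` satisfies
`⟨σ·m, x⟩ ≥ ⟨N, x⟩` for all `N ∈ E`, for some permutation `σ`. -/
theorem permuted_highest_weight_cones_cover
    {n : ℕ} (E : Finset (Fin (n + 1) → ℝ))
    (hperm : ∀ (σ : Equiv.Perm (Fin (n + 1))), ∀ N ∈ E, permVec σ N ∈ E)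
    (m : Fin (n + 1) → ℝ) (hm : m ∈ E) (hhigh : IsHighestPoint E m) :
    ∀ x : Fin (n + 1) → ℝ, ∃ σ : Equiv.Perm (Fin (n + 1)),
      ∀ N ∈ E, ∑ i, N i * x i ≤ ∑ i, permVec σ m i * x i :=
  permuted_highest_weight_cones_cover_general E hperm m hhigh
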